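/- arXiv:2201.10958 — 2 statements merged into one kernel-verified Lean document; each statement's English description precedes it below -/
import Mathlib

section
/- Let D_n = (1/2)·Σ_{T ∈ 𝒯(n)} (S(T) − C(T)), summing over all binary tree shapes with n leaves. Then for odd n > 1, D_n = Σ_{1 ≤ k ≤ n/2} k·b_k·b_{n−k} + Σ_{1 ≤ k < n} D_k·b_{n−k}, and for even n, D_n = Σ_{1 ≤ k ≤ n/2} k·b_k·b_{n−k} + Σ_{1 ≤ k < n} D_k·b_{n−k} − (n/2)·C(b_{n/2}, 2) + D_{n/2}. -/
/-- Full binary rooted trees with leaves carrying data of type `α`. -/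
inductive BTree (α : Type) : Type
  | leaf (a : α) : BTree α
  | node (l r : BTree α) : BTree α

namespace BTree

/-- Number of leaves below (the subtree rooted at) a node. -/
def leaves {α} : BTree α → ℕ
  | leaf _ => 1
  | node l r => leaves l + leaves r

/-- Sackin index: sum over internal nodes of the number of leaves below that node. -/
def sackin {α} : BTree α → ℕ
  | leaf _ => 0
  | node l r => (leaves l + leaves r) + sackin l + sackin r

/-- Colless index: sum over internal nodes of the absolute difference of leaf counts
of the two children. -/
def colless {α} : BTree α → ℕ
  | leaf _ => 0
  | node l r => ((leaves l : ℤ) - (leaves r : ℤ)).natAbs + colless l + colless r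

/-- Sum over all leaves of their depth (number of edges from the root). -/
def depthSum {α} : BTree α → ℕ
  | leaf _ => 0
  | node l r => (depthSum l + leaves l) + (depthSum r + leaves r)

/-- Sum of leaf counts `ℓ_T(u)` over all nodes `u` (including leaves, each counting 1). -/
def totalL {α} : BTree α → ℕ
  | leaf _ => 1
  | node l r => (leaves l + leaves r) + totalL l + totalL r

/-- Sum over internal nodes of the minimum of the leaf counts of the two children. -/
def minSum {α} : BTree α → ℕ
  | leaf _ => 0
  | node l r => min (leaves l) (leaves r) + minSum l + minSum r

/-- Number of edges strictly below a node (each node of the subtree other than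
its root contributes the edge to its parent). -/
def edgesBelow {α} : BTree α → ℕ
  | leaf _ => 0
  | node l r => 2 + edgesBelow l + edgesBelow r

/-- Number of internal (non-leaf) nodes. -/
def internals {α} : BTree α → ℕ
  | leaf _ => 0
  | node l r => 1 + internals l + internals r

/-- `Subtree s t` means the subtree `s` occurs in `t`; thus `Subtree (node v w) T`
expresses that `T` has an internal node whose two child subtrees are `v` and `w`. -/
inductive Subtree {α} : BTree α → BTree α → Prop
  | refl (t) : Subtree t t
  | left {s l r} : Subtree s l → Subtree s (node l r)
  | right {s l r} : Subtree s r → Subtree s (node l r)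

/-- Generating relation of tree-shape isomorphism: swapping the two children of a node. -/
inductive Rel {α} : BTree α → BTree α → Prop
  | swap (l r) : Rel (node l r) (node r l)
  | congrL {l l'} (r) : Rel l l' → Rel (node l r) (node l' r)
  | congrR (l) {r r'} : Rel r r' → Rel (node l r) (node l r')

/-- The list of leaf labels, left to right. -/
def leafList {α} : BTree α → List α
  | leaf a => [a]
  | node l r => leafList l ++ leafList r

end BTree

/-- Binary tree shapes: full binary rooted trees up to isomorphism (children unordered). -/
def Shape : Type := Quot (@BTree.Rel Unit)

noncomputable def Shape.leaves (q : Shape) : ℕ := BTree.leaves q.out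
noncomputable def Shape.sackin (q : Shape) : ℕ := BTree.sackin q.out
noncomputable def Shape.colless (q : Shape) : ℕ := BTree.colless q.out

/-- `bSh n` = number of binary tree shapes with `n` leaves. -/
noncomputable def bSh (n : ℕ) : ℕ := Set.ncard {q : Shape | q.leaves = n}

/-- `S_n`: total Sackin index over all tree shapes with `n` leaves. -/
noncomputable def Snum (n : ℕ) : ℕ := ∑ᶠ q ∈ {q : Shape | q.leaves = n}, Shape.sackin q

/-- `D_n = (1/2) Σ_{T ∈ 𝒯(n)} (S(T) - C(T))`. -/
noncomputable def Dnum (n : ℕ) : ℕ :=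
  (∑ᶠ q ∈ {q : Shape | q.leaves = n}, (Shape.sackin q - Shape.colless q)) / 2

/-- Phylogenetic trees as labelled full binary rooted trees up to isomorphism. -/
def PTree : Type := Quot (@BTree.Rel ℕ)

/-- A labelled tree is a phylogenetic tree on `n` taxa if its leaf labels are
exactly `{1, ..., n}`, each occurring once. -/
def BTree.isPhylo (n : ℕ) (t : BTree ℕ) : Prop :=
  (BTree.leafList t).Perm ((List.range n).map (· + 1))

/-- The set `𝒫(n)` of phylogenetic trees on `n` taxa. -/
noncomputable def PhyloSet (n : ℕ) : Set PTree := {q | BTree.isPhylo n q.out}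

/-- `a_n = |𝒫(n)|`. -/
noncomputable def aP (n : ℕ) : ℕ := Set.ncard (PhyloSet n)

/-- Total Sackin index over all phylogenetic trees on `n` taxa. -/
noncomputable def SpTotal (n : ℕ) : ℕ := ∑ᶠ q ∈ PhyloSet n, BTree.sackin (Quot.out q)

/-- All trees obtained from `t` by attaching a new leaf labelled `x` on each of the
`2·leaves t - 1` edges of `t` (including the open edge entering the root). -/
def BTree.attach (x : ℕ) : BTree ℕ → List (BTree ℕ)
  | .leaf a => [.node (.leaf a) (.leaf x)]
  | .node l r =>
      .node (.node l r) (.leaf x) ::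
        ((BTree.attach x l).map (fun l' => .node l' r) ++
         (BTree.attach x r).map (fun r' => .node l r'))

/-!
Since `S(T) = C(T) + 2 m(T)`, where `m(T)` sums over internal nodes the smaller of the two
children's leaf counts, `D_n = ∑_{T ∈ 𝒯(n)} m(T)`. A shape with `n ≥ 2` leaves is an unordered
pair of shapes with `k` and `n - k` leaves; summing over ordered pairs counts every shape twice,
except the shapes `{a, a}` (only for `n = 2k`), which are counted once. Expanding
`m(node a b) = min(k, n - k) + m(a) + m(b)` and folding `min(k, n - k)` onto `k ≤ n / 2`
gives the recurrence, the symmetric shapes producing the correction `D_{n/2} - (n/2) C(b_{n/2}, 2)`.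
-/

open Finset

theorem Finset.two_nsmul_sum_image_sym2Mk {α M : Type*} [DecidableEq α] [AddCommMonoid M]
    (P : Finset (α × α)) (hP : ∀ p ∈ P, p.swap ∈ P) (f : Sym2 α → M) :
    2 • ∑ z ∈ P.image (fun p => s(p.1, p.2)), f z =
      ∑ p ∈ P, f s(p.1, p.2) + ∑ p ∈ P with p.1 = p.2, f s(p.1, p.2) := by
  rw [sum_filter, ← sum_add_distrib, ← sum_fiberwise_of_maps_to
      (fun p hp => mem_image_of_mem (fun p : α × α => s(p.1, p.2)) hp), ← sum_nsmul]
  refine sum_congr rfl fun z hz => ?_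
  obtain ⟨⟨a, b⟩, hab, rfl⟩ := mem_image.mp hz
  have hfiber : {p ∈ P | s(p.1, p.2) = s(a, b)} = {(a, b), (b, a)} := by
    ext ⟨c, d⟩
    simp only [mem_filter, mem_insert, mem_singleton]
    constructor
    · rintro ⟨-, h⟩
      simpa using h
    · rintro (h | h) <;> simp only [Prod.mk.injEq] at h <;> obtain ⟨rfl, rfl⟩ := h
      · exact ⟨hab, rfl⟩
      · exact ⟨hP _ hab, Sym2.eq_swap⟩
  rw [hfiber]
  by_cases h : a = b
  · subst h; simp [two_nsmul]
  · rw [sum_pair (by simp [h])]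
    simp [h, Ne.symm h, Sym2.eq_swap (a := b), two_nsmul]

lemma Finset.sum_Ico_one_reflect {M : Type*} [AddCommMonoid M] (n : ℕ) (f : ℕ → M) :
    ∑ k ∈ Ico 1 n, f (n - k) = ∑ k ∈ Ico 1 n, f k := by
  simpa using sum_Ico_reflect f 1 (Nat.le_succ n)

lemma Finset.sum_Ico_min_sub_mul_of_symm (n : ℕ) (c : ℕ → ℕ) (hc : ∀ k ≤ n, c (n - k) = c k) :
    ∑ k ∈ Ico 1 n, min k (n - k) * c k + (if Even n then n / 2 * c (n / 2) else 0) =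
      2 * ∑ k ∈ range (n + 1) with 1 ≤ k ∧ 2 * k ≤ n, k * c k := by
  have hrange : {k ∈ range (n + 1) | 1 ≤ k ∧ 2 * k ≤ n} = {k ∈ Ico 1 n | 2 * k ≤ n} := by
    ext k
    simp only [mem_filter, mem_range, mem_Ico]
    omega
  have hlow : ∑ k ∈ Ico 1 n with 2 * k ≤ n, min k (n - k) * c k =
      ∑ k ∈ Ico 1 n with 2 * k ≤ n, k * c k :=
    sum_congr rfl fun k hk => by
      rw [mem_filter] at hk
      rw [min_eq_left (by omega)]
  have hhigh : ∑ k ∈ Ico 1 n with ¬ 2 * k ≤ n, min k (n - k) * c k =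
      ∑ k ∈ Ico 1 n with 2 * k < n, k * c k := by
    refine sum_nbij' (n - ·) (n - ·) ?_ ?_ ?_ ?_ ?_ <;> intro k hk <;>
      simp only [mem_filter, mem_Ico] at hk ⊢
    any_goals omega
    rw [min_eq_right (by omega), hc k (by omega)]
  have hmid : ∑ k ∈ Ico 1 n with 2 * k < n, k * c k + (if Even n then n / 2 * c (n / 2) else 0) =
      ∑ k ∈ Ico 1 n with 2 * k ≤ n, k * c k := by
    split_ifs with hn
    · obtain ⟨m, rfl⟩ := hn
      rcases Nat.eq_zero_or_pos m with rfl | hm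
      · simp
      have hins : {k ∈ Ico 1 (m + m) | 2 * k ≤ m + m} =
          insert m {k ∈ Ico 1 (m + m) | 2 * k < m + m} := by
        ext k
        simp only [mem_insert, mem_filter, mem_Ico]
        omega
      have hhalf : (m + m) / 2 = m := by omega
      rw [hins, sum_insert (by simp only [mem_filter, mem_Ico]; omega), add_comm, hhalf]
    · rw [add_zero]
      refine sum_congr (filter_congr fun k _ => ?_) fun _ _ => rfl
      obtain ⟨m, rfl⟩ := Nat.not_even_iff_odd.mp hn
      omega
  rw [← sum_filter_add_sum_filter_not (Ico 1 n) (2 * · ≤ n), hlow, hhigh, add_assoc, hmid, hrange,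
    two_mul]

lemma Quot.apply_out_eq_lift {α β : Sort*} {r : α → α → Prop} (f : α → β)
    (hf : ∀ a b, r a b → f a = f b) (q : Quot r) : f q.out = Quot.lift f hf q :=
  congrArg (Quot.lift f hf) (Quot.out_eq q)

namespace BTree

variable {α : Type}

lemma one_le_leaves (t : BTree α) : 1 ≤ t.leaves := by
  induction t with
  | leaf => exact le_rfl
  | node l r ihl _ => exact ihl.trans (Nat.le_add_right _ _)

lemma sackin_eq_colless_add_two_mul_minSum (t : BTree α) :
    t.sackin = t.colless + 2 * t.minSum := by
  induction t with
  | leaf => rfl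
  | node l r ihl ihr =>
    simp only [sackin, colless, minSum]
    omega

lemma Rel.leaves_eq {t u : BTree α} (h : Rel t u) : t.leaves = u.leaves := by
  induction h with
  | swap l r => exact Nat.add_comm _ _
  | congrL r _ ih | congrR l _ ih => simp only [leaves, ih]

lemma Rel.minSum_eq {t u : BTree α} (h : Rel t u) : t.minSum = u.minSum := by
  induction h with
  | swap l r => simp only [minSum, min_comm]; omega
  | congrL r h ih | congrR l h ih => simp only [minSum, ih, h.leaves_eq]

lemma finite_setOf_leaves_le [Finite α] (n : ℕ) : {t : BTree α | t.leaves ≤ n}.Finite := by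
  induction n with
  | zero =>
    refine Set.finite_empty.subset fun t (ht : t.leaves ≤ 0) => ?_
    exact absurd ht (Nat.not_le.mpr (one_le_leaves t))
  | succ n ih =>
    refine ((Set.finite_range leaf).union (ih.image2 node ih)).subset ?_
    rintro (a | ⟨l, r⟩) ht
    · exact Or.inl ⟨a, rfl⟩
    · have := one_le_leaves l
      have := one_le_leaves r
      simp only [Set.mem_ofPred_eq, leaves] at ht
      exact Or.inr ⟨l, by simp only [Set.mem_ofPred_eq]; omega, r,
        by simp only [Set.mem_ofPred_eq]; omega, rfl⟩

end BTree

namespace Shape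

def node : Shape → Shape → Shape :=
  Quot.map₂ BTree.node (fun l _ _ h => .congrR l h) (fun _ _ r h => .congrL r h)

def minSum : Shape → ℕ := Quot.lift BTree.minSum fun _ _ h => h.minSum_eq

def children : Shape → Option (Sym2 Shape) :=
  Quot.lift (fun t => match t with
      | .leaf _ => none
      | .node l r => some s(Quot.mk _ l, Quot.mk _ r))
    fun _ _ h => by
      cases h with
      | swap => exact congrArg some Sym2.eq_swap
      | congrL r h => exact congrArg (fun x => some s(x, Quot.mk _ r)) (Quot.sound h)
      | congrR l h => exact congrArg (fun x => some s(Quot.mk _ l, x)) (Quot.sound h)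

lemma leaves_mk (t : BTree Unit) : Shape.leaves (Quot.mk _ t) = t.leaves :=
  Quot.apply_out_eq_lift BTree.leaves (fun _ _ h => h.leaves_eq) _

lemma one_le_leaves (q : Shape) : 1 ≤ q.leaves := BTree.one_le_leaves _

lemma sackin_sub_colless (q : Shape) : q.sackin - q.colless = 2 * q.minSum := by
  have h : q.out.minSum = q.minSum := Quot.apply_out_eq_lift _ (fun _ _ h => h.minSum_eq) q
  rw [Shape.sackin, Shape.colless, BTree.sackin_eq_colless_add_two_mul_minSum, h]
  omega

lemma node_comm (a b : Shape) : node a b = node b a :=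
  Quot.induction_on₂ a b fun l r => Quot.sound (.swap l r)

lemma leaves_node (a b : Shape) : (node a b).leaves = a.leaves + b.leaves :=
  Quot.induction_on₂ a b fun l r => by
    rw [node, Quot.map₂_mk, leaves_mk, leaves_mk, leaves_mk, BTree.leaves]

lemma minSum_node (a b : Shape) :
    (node a b).minSum = min a.leaves b.leaves + a.minSum + b.minSum :=
  Quot.induction_on₂ a b fun l r => by
    rw [leaves_mk, leaves_mk]
    rfl

lemma children_node (a b : Shape) : (node a b).children = some s(a, b) :=
  Quot.induction_on₂ a b fun _ _ => rfl

lemma node_eq_node_iff {a b c d : Shape} : node a b = node c d ↔ s(a, b) = s(c, d) := by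
  refine ⟨fun h => Option.some_injective _ ?_, fun h => ?_⟩
  · rw [← children_node, h, children_node]
  · rcases Sym2.eq_iff.mp h with ⟨rfl, rfl⟩ | ⟨rfl, rfl⟩
    · rfl
    · exact node_comm _ _

lemma exists_eq_node {q : Shape} (hq : 2 ≤ q.leaves) : ∃ a b, q = node a b := by
  rw [← Quot.out_eq q] at hq ⊢
  cases h : q.out with
  | leaf => simp [h, leaves_mk, BTree.leaves] at hq
  | node l r => exact ⟨Quot.mk _ l, Quot.mk _ r, rfl⟩

noncomputable instance : DecidableEq Shape := Classical.decEq _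

lemma finite_setOf_leaves_eq (n : ℕ) : {q : Shape | q.leaves = n}.Finite :=
  ((BTree.finite_setOf_leaves_le n).image (Quot.mk _)).subset fun q hq =>
    ⟨q.out, le_of_eq hq, Quot.out_eq q⟩

noncomputable def withLeaves (n : ℕ) : Finset Shape := (finite_setOf_leaves_eq n).toFinset

@[simp]
lemma mem_withLeaves {q : Shape} {n : ℕ} : q ∈ withLeaves n ↔ q.leaves = n :=
  Set.Finite.mem_toFinset _

lemma card_withLeaves (n : ℕ) : #(withLeaves n) = bSh n :=
  (Set.ncard_eq_toFinset_card _ _).symm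

lemma sum_withLeaves_minSum (n : ℕ) : ∑ q ∈ withLeaves n, q.minSum = Dnum n := by
  rw [Dnum, finsum_mem_eq_finite_toFinset_sum _ (finite_setOf_leaves_eq n)]
  simp only [sackin_sub_colless, ← mul_sum]
  exact (Nat.mul_div_cancel_left _ two_pos).symm

noncomputable def pairs (n : ℕ) : Finset (Shape × Shape) :=
  (Ico 1 n).biUnion fun k => withLeaves k ×ˢ withLeaves (n - k)

lemma mem_pairs {p : Shape × Shape} {n : ℕ} : p ∈ pairs n ↔ p.1.leaves + p.2.leaves = n := by
  have := one_le_leaves p.1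
  have := one_le_leaves p.2
  simp only [pairs, mem_biUnion, mem_Ico, mem_product, mem_withLeaves]
  constructor
  · rintro ⟨k, -, h1, h2⟩
    omega
  · intro h
    exact ⟨p.1.leaves, ⟨by omega, by omega⟩, rfl, by omega⟩

lemma sum_pairs {M : Type*} [AddCommMonoid M] (n : ℕ) (f : Shape × Shape → M) :
    ∑ p ∈ pairs n, f p = ∑ k ∈ Ico 1 n, ∑ a ∈ withLeaves k, ∑ b ∈ withLeaves (n - k), f (a, b) := by
  rw [pairs, sum_biUnion]
  · simp only [sum_product]
  · intro k _ l _ hkl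
    simp only [Function.onFun, disjoint_left, mem_product, mem_withLeaves]
    exact fun p hk hl => hkl (hk.1.symm.trans hl.1)

lemma image_pairs {n : ℕ} (hn : 2 ≤ n) :
    (pairs n).image (fun p => node p.1 p.2) = withLeaves n := by
  ext q
  simp only [mem_image, mem_pairs, mem_withLeaves]
  constructor
  · rintro ⟨p, hp, rfl⟩
    rw [leaves_node, hp]
  · rintro rfl
    obtain ⟨a, b, rfl⟩ := exists_eq_node hn
    exact ⟨(a, b), (leaves_node a b).symm, rfl⟩

lemma sum_pairs_filter_fst_eq_snd {M : Type*} [AddCommMonoid M] (n : ℕ) (f : Shape × Shape → M) :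
    ∑ p ∈ pairs n with p.1 = p.2, f p =
      if Even n then ∑ a ∈ withLeaves (n / 2), f (a, a) else 0 := by
  split_ifs with hn
  · obtain ⟨m, rfl⟩ := hn
    have hm : (m + m) / 2 = m := by omega
    rw [hm]
    refine sum_nbij' Prod.fst (fun a => (a, a)) ?_ ?_ ?_ (fun _ _ => rfl) ?_
    all_goals simp only [mem_filter, mem_pairs, mem_withLeaves, and_imp, Prod.forall]
    · rintro a b hab rfl
      omega
    · intro a ha
      exact ⟨by rw [ha], trivial⟩
    · rintro a b - rfl
      rfl
    · rintro a b - rfl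
      rfl
  · refine sum_eq_zero fun p hp => absurd ?_ hn
    rw [mem_filter, mem_pairs] at hp
    rw [← hp.1, hp.2]
    exact Even.add_self _

lemma two_nsmul_sum_withLeaves {M : Type*} [AddCommMonoid M] {n : ℕ} (hn : 2 ≤ n)
    (g : Shape → M) :
    2 • ∑ q ∈ withLeaves n, g q =
      ∑ p ∈ pairs n, g (node p.1 p.2) + ∑ p ∈ pairs n with p.1 = p.2, g (node p.1 p.2) := by
  set join : Sym2 Shape → Shape := Sym2.lift ⟨node, node_comm⟩
  have hjoin : join.Injective := by
    intro z w h
    induction z, w using Sym2.inductionOn₂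
    exact node_eq_node_iff.mp h
  have hW : withLeaves n = ((pairs n).image fun p => s(p.1, p.2)).image join := by
    rw [image_image, ← image_pairs hn]
    rfl
  rw [hW, sum_image hjoin.injOn, two_nsmul_sum_image_sym2Mk]
  · rfl
  · intro p hp
    rw [mem_pairs] at hp ⊢
    rw [← hp, add_comm]
    rfl

lemma sum_pairs_minSum_node (n : ℕ) :
    ∑ p ∈ pairs n, (node p.1 p.2).minSum = ∑ k ∈ Ico 1 n,
      (min k (n - k) * bSh k * bSh (n - k) + Dnum k * bSh (n - k) + bSh k * Dnum (n - k)) := by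
  rw [sum_pairs]
  refine sum_congr rfl fun k _ => ?_
  calc ∑ a ∈ withLeaves k, ∑ b ∈ withLeaves (n - k), (node a b).minSum
      = ∑ a ∈ withLeaves k, ∑ b ∈ withLeaves (n - k), (min k (n - k) + a.minSum + b.minSum) :=
        sum_congr rfl fun a ha => sum_congr rfl fun b hb => by
          rw [minSum_node, mem_withLeaves.mp ha, mem_withLeaves.mp hb]
    _ = _ := by
      simp only [sum_add_distrib, sum_const, smul_eq_mul, ← mul_sum,
        sum_withLeaves_minSum, card_withLeaves]
      ring

lemma sum_withLeaves_minSum_node_self (m : ℕ) :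
    ∑ a ∈ withLeaves m, (node a a).minSum = m * bSh m + 2 * Dnum m := by
  calc ∑ a ∈ withLeaves m, (node a a).minSum = ∑ a ∈ withLeaves m, (m + 2 * a.minSum) :=
        sum_congr rfl fun a ha => by
          rw [minSum_node, mem_withLeaves.mp ha, min_self, two_mul, add_assoc]
    _ = m * bSh m + 2 * Dnum m := by
      rw [sum_add_distrib, sum_const, smul_eq_mul, ← mul_sum, sum_withLeaves_minSum,
        card_withLeaves, mul_comm]

end Shape

open Shape in
lemma two_mul_Dnum {n : ℕ} (hn : 2 ≤ n) :
    2 * Dnum n = ∑ k ∈ Ico 1 n, min k (n - k) * bSh k * bSh (n - k) +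
      2 * ∑ k ∈ Ico 1 n, Dnum k * bSh (n - k) +
      (if Even n then n / 2 * bSh (n / 2) + 2 * Dnum (n / 2) else 0) := by
  have h := two_nsmul_sum_withLeaves hn minSum
  rw [sum_withLeaves_minSum, sum_pairs_minSum_node, sum_pairs_filter_fst_eq_snd,
    sum_withLeaves_minSum_node_self, smul_eq_mul] at h
  have hreflect : ∑ k ∈ Ico 1 n, bSh k * Dnum (n - k) = ∑ k ∈ Ico 1 n, Dnum k * bSh (n - k) := by
    rw [← sum_Ico_one_reflect n (fun k => Dnum k * bSh (n - k))]
    refine sum_congr rfl fun k hk => ?_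
    rw [mem_Ico] at hk
    rw [Nat.sub_sub_self hk.2.le, mul_comm]
  rw [h, sum_add_distrib, sum_add_distrib, hreflect]
  ring

/-- the recurrences for `D_n = (1/2) Σ_T (S(T) - C(T))`. -/
theorem stmt_9 : ∀ n : ℕ, 1 < n →
    (Odd n → (Dnum n : ℤ) =
        (∑ k ∈ (Finset.range (n + 1)).filter (fun k => 1 ≤ k ∧ 2 * k ≤ n),
            (k : ℤ) * (bSh k : ℤ) * (bSh (n - k) : ℤ)) +
        (∑ k ∈ Finset.Ico 1 n, (Dnum k : ℤ) * (bSh (n - k) : ℤ))) ∧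
    (Even n → (Dnum n : ℤ) =
        (∑ k ∈ (Finset.range (n + 1)).filter (fun k => 1 ≤ k ∧ 2 * k ≤ n),
            (k : ℤ) * (bSh k : ℤ) * (bSh (n - k) : ℤ)) +
        (∑ k ∈ Finset.Ico 1 n, (Dnum k : ℤ) * (bSh (n - k) : ℤ)) -
        ((n / 2 : ℕ) : ℤ) * (Nat.choose (bSh (n / 2)) 2 : ℤ) +
        (Dnum (n / 2) : ℤ)) := by
  intro n hn
  have hD := two_mul_Dnum hn
  have hmin := sum_Ico_min_sub_mul_of_symm n (fun k => bSh k * bSh (n - k))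
    fun k hk => by rw [Nat.sub_sub_self hk, mul_comm]
  simp only [← mul_assoc] at hmin
  refine ⟨fun hodd => ?_, fun heven => ?_⟩
  · rw [if_neg (Nat.not_even_iff_odd.mpr hodd)] at hD hmin
    have h : Dnum n = ∑ k ∈ range (n + 1) with 1 ≤ k ∧ 2 * k ≤ n, k * bSh k * bSh (n - k) +
        ∑ k ∈ Ico 1 n, Dnum k * bSh (n - k) := by
      omega
    exact_mod_cast h
  · rw [if_pos heven] at hD hmin
    obtain ⟨m, rfl⟩ := heven
    have hhalf : (m + m) / 2 = m := by omega
    rw [hhalf] at hD hmin ⊢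
    rw [Nat.add_sub_cancel] at hmin
    have hchoose : (2 : ℤ) * (bSh m).choose 2 = bSh m * bSh m - bSh m := by
      qify
      rw [Nat.cast_choose_two]
      ring
    replace hD := congrArg (Nat.cast : ℕ → ℤ) hD
    replace hmin := congrArg (Nat.cast : ℕ → ℤ) hmin
    push_cast at hD hmin
    apply mul_left_cancel₀ (two_ne_zero' ℤ)
    linear_combination hD + hmin + (m : ℤ) * hchoose
end

section
/- For every n ≥ 1, the total Sackin index S⁽ᵖ⁾_n = Σ_{P ∈ 𝒫(n)} S(P) over all phylogenetic trees on n taxa equals 2^{n−1}·n! − n·(2n−2)!/(2^{n−1}(n−1)!). -/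
namespace BTree

deriving instance DecidableEq for BTree

variable {α : Type}

def labels (t : BTree α) : Multiset α := leafList t

@[simp] lemma labels_leaf (a : α) : labels (leaf a) = {a} := rfl

@[simp] lemma labels_node (l r : BTree α) : labels (node l r) = labels l + labels r := by
  simp [labels, leafList]

lemma card_labels (t : BTree α) : Multiset.card (labels t) = leaves t := by
  induction t with
  | leaf a => rfl
  | node l r ihl ihr => simp [leaves, ihl, ihr]

lemma leaves_pos (t : BTree α) : 0 < leaves t := by
  induction t with
  | leaf a => simp [leaves]
  | node l r ihl ihr => simp [leaves]; omega

lemma labels_ne_zero (t : BTree α) : labels t ≠ 0 := by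
  simpa [← Multiset.card_pos, card_labels] using leaves_pos t

namespace Rel

lemma symm {a b : BTree α} (h : Rel a b) : Rel b a := by
  induction h with
  | swap l r => exact swap r l
  | congrL r _ ih => exact congrL r ih
  | congrR l _ ih => exact congrR l ih

lemma left_ne_leaf {a b : BTree α} (h : Rel a b) (x : α) : a ≠ leaf x := by
  cases h <;> simp

lemma right_ne_leaf {a b : BTree α} (h : Rel a b) (x : α) : b ≠ leaf x :=
  h.symm.left_ne_leaf x

lemma labels_eq {a b : BTree α} (h : Rel a b) : labels a = labels b := by
  induction h with
  | swap l r => simp [add_comm]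
  | congrL r _ ih => simp [ih]
  | congrR l _ ih => simp [ih]

lemma leaves_eq_s19 {a b : BTree α} (h : Rel a b) : leaves a = leaves b := by
  simpa [card_labels] using congrArg Multiset.card h.labels_eq

lemma sackin_eq {a b : BTree α} (h : Rel a b) : sackin a = sackin b := by
  induction h with
  | swap l r => simp only [sackin]; omega
  | congrL r h ih => simp [sackin, h.leaves_eq_s19, ih]
  | congrR l h ih => simp [sackin, h.leaves_eq_s19, ih]

end Rel

lemma eq_of_mk_eq {β : Sort*} (f : BTree α → β) (hf : ∀ a b, Rel a b → f a = f b)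
    {a b : BTree α} (h : Quot.mk Rel a = Quot.mk Rel b) : f a = f b :=
  congrArg (Quot.lift f hf) h

lemma mk_node_left {a b : BTree α} (r : BTree α) (h : Quot.mk Rel a = Quot.mk Rel b) :
    Quot.mk Rel (node a r) = Quot.mk Rel (node b r) :=
  eq_of_mk_eq (fun l => Quot.mk Rel (node l r)) (fun _ _ h => Quot.sound (.congrL r h)) h

lemma mk_node_right (l : BTree α) {a b : BTree α} (h : Quot.mk Rel a = Quot.mk Rel b) :
    Quot.mk Rel (node l a) = Quot.mk Rel (node l b) :=
  eq_of_mk_eq (fun r => Quot.mk Rel (node l r)) (fun _ _ h => Quot.sound (.congrR l h)) h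

section eraseLeaf

variable [DecidableEq α]

def eraseLeaf (x : α) : BTree α → BTree α
  | leaf a => leaf a
  | node l r =>
    if l = leaf x then r else if r = leaf x then l else node (eraseLeaf x l) (eraseLeaf x r)

lemma eraseLeaf_of_not_mem {x : α} {t : BTree α} (hx : x ∉ labels t) : eraseLeaf x t = t := by
  induction t with
  | leaf a => rfl
  | node l r ihl ihr =>
    simp only [labels_node, Multiset.mem_add, not_or] at hx
    have hl : l ≠ leaf x := by rintro rfl; simp at hx
    have hr : r ≠ leaf x := by rintro rfl; simp at hx
    rw [eraseLeaf, if_neg hl, if_neg hr, ihl hx.1, ihr hx.2]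

lemma Rel.mk_eraseLeaf_eq {x : α} {a b : BTree α} (h : Rel a b) :
    Quot.mk Rel (eraseLeaf x a) = Quot.mk Rel (eraseLeaf x b) := by
  induction h with
  | swap l r =>
    by_cases hl : l = leaf x <;> by_cases hr : r = leaf x
    · subst hl hr; rfl
    · simp [eraseLeaf, hl, hr]
    · simp [eraseLeaf, hl, hr]
    · simp only [eraseLeaf, hl, hr, if_false]
      exact Quot.sound (.swap _ _)
  | congrL r h ih =>
    by_cases hr : r = leaf x
    · simpa [eraseLeaf, h.left_ne_leaf, h.right_ne_leaf, hr] using Quot.sound h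
    · simpa [eraseLeaf, h.left_ne_leaf, h.right_ne_leaf, hr] using mk_node_left _ ih
  | congrR l h ih =>
    by_cases hl : l = leaf x
    · simpa [eraseLeaf, h.left_ne_leaf, h.right_ne_leaf, hl] using Quot.sound h
    · simpa [eraseLeaf, h.left_ne_leaf, h.right_ne_leaf, hl] using mk_node_right _ ih

lemma mk_eraseLeaf_eq (x : α) {a b : BTree α} (h : Quot.mk Rel a = Quot.mk Rel b) :
    Quot.mk Rel (eraseLeaf x a) = Quot.mk Rel (eraseLeaf x b) :=
  eq_of_mk_eq (fun t => Quot.mk Rel (eraseLeaf x t)) (fun _ _ h => h.mk_eraseLeaf_eq) h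

end eraseLeaf

-- A set, so that it is swap-invariant even when `x` labels several leaves.
def siblingLabels (x : α) : BTree α → Set (Multiset α)
  | leaf _ => ∅
  | node l r => {m | l = leaf x ∧ m = labels r} ∪ {m | r = leaf x ∧ m = labels l} ∪
      siblingLabels x l ∪ siblingLabels x r

lemma siblingLabels_of_not_mem {x : α} {t : BTree α} (hx : x ∉ labels t) :
    siblingLabels x t = ∅ := by
  induction t with
  | leaf a => rfl
  | node l r ihl ihr =>
    simp only [labels_node, Multiset.mem_add, not_or] at hx
    have hl : l ≠ leaf x := by rintro rfl; simp at hx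
    have hr : r ≠ leaf x := by rintro rfl; simp at hx
    simp [siblingLabels, hl, hr, ihl hx.1, ihr hx.2]

lemma Rel.siblingLabels_eq {x : α} {a b : BTree α} (h : Rel a b) :
    siblingLabels x a = siblingLabels x b := by
  induction h with
  | swap l r => ext m; simp only [siblingLabels, Set.mem_union, Set.mem_ofPred_eq]; tauto
  | congrL r h ih => simp [siblingLabels, h.left_ne_leaf, h.right_ne_leaf, h.labels_eq, ih]
  | congrR l h ih => simp [siblingLabels, h.left_ne_leaf, h.right_ne_leaf, h.labels_eq, ih]

def subtreeLabels : BTree α → List (Multiset α)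
  | leaf a => [{a}]
  | node l r => labels (node l r) :: (subtreeLabels l ++ subtreeLabels r)

lemma le_labels_of_mem_subtreeLabels {t : BTree α} {m : Multiset α}
    (h : m ∈ subtreeLabels t) : m ≤ labels t := by
  induction t with
  | leaf a => simp_all [subtreeLabels]
  | node l r ihl ihr =>
    simp only [subtreeLabels, List.mem_cons, List.mem_append] at h
    rcases h with rfl | hl | hr
    · exact le_rfl
    · exact (ihl hl).trans (by simp)
    · exact (ihr hr).trans (by simp)

lemma ne_zero_of_mem_subtreeLabels {t : BTree α} {m : Multiset α} (h : m ∈ subtreeLabels t) :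
    m ≠ 0 := by
  induction t with
  | leaf a => simp_all [subtreeLabels]
  | node l r ihl ihr =>
    simp only [subtreeLabels, List.mem_cons, List.mem_append] at h
    rcases h with rfl | hl | hr
    exacts [labels_ne_zero _, ihl hl, ihr hr]

lemma nodup_subtreeLabels {t : BTree α} (h : (labels t).Nodup) : (subtreeLabels t).Nodup := by
  induction t with
  | leaf a => simp [subtreeLabels]
  | node l r ihl ihr =>
    rw [labels_node, Multiset.nodup_add] at h
    obtain ⟨hl, hr, hdisj⟩ := h
    have not_le : ∀ {s : BTree α}, leaves s < leaves l + leaves r →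
        ¬ labels (node l r) ≤ labels s := fun {s} hlt hle => by
      have := Multiset.card_le_card hle
      simp only [labels_node, Multiset.card_add, card_labels] at this
      omega
    have hl_pos := leaves_pos l
    have hr_pos := leaves_pos r
    simp only [subtreeLabels, List.nodup_cons, List.nodup_append, List.mem_append, not_or]
    refine ⟨⟨fun hm => not_le (by omega) (le_labels_of_mem_subtreeLabels hm),
      fun hm => not_le (by omega) (le_labels_of_mem_subtreeLabels hm)⟩,
      ihl hl, ihr hr, ?_⟩
    rintro m hml _ hmr rfl
    obtain ⟨y, hy⟩ := Multiset.exists_mem_of_ne_zero (ne_zero_of_mem_subtreeLabels hml)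
    exact Multiset.disjoint_left.mp hdisj
      (Multiset.mem_of_le (le_labels_of_mem_subtreeLabels hml) hy)
      (Multiset.mem_of_le (le_labels_of_mem_subtreeLabels hmr) hy)

lemma ne_leaf_of_mem_attach {x : ℕ} {t t' : BTree ℕ} (h : t' ∈ attach x t) (y : ℕ) :
    t' ≠ leaf y := by
  rintro rfl
  cases t <;> simp [attach] at h

lemma labels_of_mem_attach {x : ℕ} {t t' : BTree ℕ} (h : t' ∈ attach x t) :
    labels t' = x ::ₘ labels t := by
  induction t generalizing t' with
  | leaf a =>
    simp only [attach, List.mem_singleton] at h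
    simpa [h] using Multiset.pair_comm a x
  | node l r ihl ihr =>
    simp only [attach, List.mem_cons, List.mem_append, List.mem_map] at h
    rcases h with rfl | ⟨a, ha, rfl⟩ | ⟨b, hb, rfl⟩
    · simp [← Multiset.singleton_add, add_comm]
    · simp [ihl ha]
    · simp [ihr hb]

lemma leaves_of_mem_attach {x : ℕ} {t t' : BTree ℕ} (h : t' ∈ attach x t) :
    leaves t' = leaves t + 1 := by
  simpa [card_labels] using congrArg Multiset.card (labels_of_mem_attach h)

lemma length_attach (x : ℕ) (t : BTree ℕ) : (attach x t).length + 1 = 2 * leaves t := by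
  induction t with
  | leaf a => simp [attach, leaves]
  | node l r ihl ihr => simp [attach, leaves]; omega

lemma node_leaf_mem_attach (x : ℕ) (t : BTree ℕ) : node t (leaf x) ∈ attach x t := by
  cases t <;> simp [attach]

lemma eraseLeaf_of_mem_attach {x : ℕ} {t t' : BTree ℕ} (hx : x ∉ labels t)
    (h : t' ∈ attach x t) : eraseLeaf x t' = t := by
  induction t generalizing t' with
  | leaf a =>
    simp only [attach, List.mem_singleton] at h
    subst h
    have : a ≠ x := by rintro rfl; simp at hx
    simp [eraseLeaf, this]
  | node l r ihl ihr =>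
    simp only [labels_node, Multiset.mem_add, not_or] at hx
    have hl : l ≠ leaf x := by rintro rfl; simp at hx
    have hr : r ≠ leaf x := by rintro rfl; simp at hx
    simp only [attach, List.mem_cons, List.mem_append, List.mem_map] at h
    rcases h with rfl | ⟨a, ha, rfl⟩ | ⟨b, hb, rfl⟩
    · simp [eraseLeaf]
    · simp only [eraseLeaf, ne_leaf_of_mem_attach ha, hr, if_false, ihl hx.1 ha,
        eraseLeaf_of_not_mem hx.2]
    · simp only [eraseLeaf, ne_leaf_of_mem_attach hb, hl, if_false, ihr hx.2 hb,
        eraseLeaf_of_not_mem hx.1]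

lemma map_siblingLabels_attach {x : ℕ} {t : BTree ℕ} (hx : x ∉ labels t) :
    (attach x t).map (siblingLabels x) = (subtreeLabels t).map ({·}) := by
  induction t with
  | leaf a =>
    have : a ≠ x := by rintro rfl; simp at hx
    simp [attach, subtreeLabels, siblingLabels, this]
  | node l r ihl ihr =>
    simp only [labels_node, Multiset.mem_add, not_or] at hx
    have hl : l ≠ leaf x := by rintro rfl; simp at hx
    have hr : r ≠ leaf x := by rintro rfl; simp at hx
    have hleft : ∀ a ∈ attach x l, siblingLabels x (node a r) = siblingLabels x a := by
      intro a ha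
      simp [siblingLabels, ne_leaf_of_mem_attach ha, hr, siblingLabels_of_not_mem hx.2]
    have hright : ∀ b ∈ attach x r, siblingLabels x (node l b) = siblingLabels x b := by
      intro b hb
      simp [siblingLabels, ne_leaf_of_mem_attach hb, hl, siblingLabels_of_not_mem hx.1]
    have hroot : siblingLabels x (node (node l r) (leaf x)) = {labels l + labels r} := by
      ext m
      simp [siblingLabels, hl, hr, siblingLabels_of_not_mem hx.1, siblingLabels_of_not_mem hx.2]
    simp only [attach, subtreeLabels, List.map_cons, List.map_append, List.map_map,
      Function.comp_def, hroot, labels_node, List.map_congr_left hleft,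
      List.map_congr_left hright, ihl hx.1, ihr hx.2]

lemma nodup_map_mk_attach {x : ℕ} {t : BTree ℕ} (hx : x ∉ labels t) (ht : (labels t).Nodup) :
    ((attach x t).map (Quot.mk Rel)).Nodup := by
  have hsib : ((attach x t).map (siblingLabels x)).Nodup := by
    rw [map_siblingLabels_attach hx]
    exact (nodup_subtreeLabels ht).map Set.singleton_injective
  exact List.Nodup.of_map (Quot.lift (siblingLabels x) fun _ _ h => Rel.siblingLabels_eq h)
    (by rwa [List.map_map])

lemma Rel.image_mk_attach_subset {x : ℕ} {s s' : BTree ℕ} (h : Rel s s') :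
    Quot.mk Rel '' {t | t ∈ attach x s} ⊆ Quot.mk Rel '' {t | t ∈ attach x s'} := by
  rintro _ ⟨t, ht, rfl⟩
  induction h generalizing t with
  | swap l r =>
    simp only [attach, Set.mem_ofPred_eq, List.mem_cons, List.mem_append, List.mem_map] at ht
    rcases ht with rfl | ⟨a, ha, rfl⟩ | ⟨b, hb, rfl⟩
    · exact ⟨_, by simp [attach], Quot.sound (.congrL _ (.swap r l))⟩
    · exact ⟨node r a, by simp [attach, ha], Quot.sound (.swap r a)⟩
    · exact ⟨node b l, by simp [attach, hb], Quot.sound (.swap b l)⟩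
  | congrL r h ih =>
    simp only [attach, Set.mem_ofPred_eq, List.mem_cons, List.mem_append, List.mem_map] at ht
    rcases ht with rfl | ⟨a, ha, rfl⟩ | ⟨b, hb, rfl⟩
    · exact ⟨_, by simp [attach], Quot.sound (.congrL _ (.congrL _ h.symm))⟩
    · obtain ⟨a', ha' : a' ∈ attach x _, hm⟩ := ih a ha
      exact ⟨node a' r, by simp [attach, ha'], mk_node_left r hm⟩
    · exact ⟨_, by simp [attach, hb], Quot.sound (.congrL b h.symm)⟩
  | congrR l h ih =>
    simp only [attach, Set.mem_ofPred_eq, List.mem_cons, List.mem_append, List.mem_map] at ht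
    rcases ht with rfl | ⟨a, ha, rfl⟩ | ⟨b, hb, rfl⟩
    · exact ⟨_, by simp [attach], Quot.sound (.congrL _ (.congrR _ h.symm))⟩
    · exact ⟨_, by simp [attach, ha], Quot.sound (.congrR a h.symm)⟩
    · obtain ⟨b', hb' : b' ∈ attach x _, hm⟩ := ih b hb
      exact ⟨node l b', by simp [attach, hb'], mk_node_right l hm⟩

lemma exists_mem_attach_mk_eq {x : ℕ} {s s' t : BTree ℕ}
    (h : Quot.mk Rel s = Quot.mk Rel s') (ht : t ∈ attach x s) :
    ∃ t' ∈ attach x s', Quot.mk Rel t' = Quot.mk Rel t := by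
  have himage := eq_of_mk_eq (fun s => Quot.mk Rel '' {t | t ∈ attach x s})
    (fun _ _ h => h.image_mk_attach_subset.antisymm h.symm.image_mk_attach_subset) h
  have : Quot.mk Rel t ∈ Quot.mk Rel '' {t | t ∈ attach x s'} := himage ▸ ⟨t, ht, rfl⟩
  exact this

lemma exists_mem_attach_of_mem_labels {x : ℕ} {t : BTree ℕ} (hx : x ∈ labels t)
    (ht : t ≠ leaf x) :
    ∃ s, labels t = x ::ₘ labels s ∧ ∃ t' ∈ attach x s, Quot.mk Rel t' = Quot.mk Rel t := by
  induction t with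
  | leaf a => simp_all
  | node l r ihl ihr =>
    by_cases hl : l = leaf x
    · subst hl
      exact ⟨r, by rw [labels_node, labels_leaf, Multiset.singleton_add], _,
        node_leaf_mem_attach x r, Quot.sound (.swap _ _)⟩
    by_cases hr : r = leaf x
    · subst hr
      exact ⟨l, by simp [← Multiset.singleton_add, add_comm], _,
        node_leaf_mem_attach x l, rfl⟩
    rcases Multiset.mem_add.mp (by simpa using hx) with hxl | hxr
    · obtain ⟨s, hs, t', ht', hm⟩ := ihl hxl hl
      exact ⟨node s r, by simp [hs], node t' r, by simp [attach, ht'], mk_node_left r hm⟩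
    · obtain ⟨s, hs, t', ht', hm⟩ := ihr hxr hr
      exact ⟨node l s, by simp [hs], node l t', by simp [attach, ht'], mk_node_right l hm⟩

lemma sum_sackin_attach (x : ℕ) (t : BTree ℕ) :
    ((attach x t).map sackin).sum = (2 * leaves t + 2) * sackin t + (leaves t + 1) := by
  induction t with
  | leaf a => simp [attach, sackin, leaves]
  | node l r ihl ihr =>
    have hl : ∀ a ∈ attach x l,
        sackin (node a r) = sackin a + (leaves l + 1 + leaves r + sackin r) := by
      intro a ha; simp only [sackin, leaves_of_mem_attach ha]; ring
    have hr : ∀ b ∈ attach x r,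
        sackin (node l b) = sackin b + (leaves r + 1 + leaves l + sackin l) := by
      intro b hb; simp only [sackin, leaves_of_mem_attach hb]; ring
    have hLl := length_attach x l
    have hLr := length_attach x r
    simp only [attach, List.map_cons, List.sum_cons, List.map_append, List.sum_append,
      List.map_map, Function.comp_def, List.map_congr_left hl, List.map_congr_left hr,
      List.sum_map_add, ihl, ihr, List.map_const', List.sum_replicate, smul_eq_mul]
    simp only [sackin, leaves]
    zify at hLl hLr ⊢
    linear_combination (↑(leaves l) + 1 + ↑(leaves r) + ↑(sackin r) : ℤ) * hLl +
      (↑(leaves r) + 1 + ↑(leaves l) + ↑(sackin l) : ℤ) * hLr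

end BTree

open BTree

abbrev PTree.mk (t : BTree ℕ) : PTree := Quot.mk Rel t

def taxa (n : ℕ) : Multiset ℕ := (Multiset.range n).map (· + 1)

lemma taxa_succ (n : ℕ) : taxa (n + 1) = (n + 1) ::ₘ taxa n := by
  simp [taxa, Multiset.range_succ]

lemma mem_taxa {n y : ℕ} : y ∈ taxa n ↔ 1 ≤ y ∧ y ≤ n := by
  simp only [taxa, Multiset.mem_map, Multiset.mem_range]
  exact ⟨by rintro ⟨a, ha, rfl⟩; omega, fun h => ⟨y - 1, by omega, by omega⟩⟩

lemma nodup_taxa (n : ℕ) : (taxa n).Nodup :=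
  (Multiset.nodup_range n).map (add_left_injective 1)

lemma card_taxa (n : ℕ) : Multiset.card (taxa n) = n := by
  simp [taxa]

lemma BTree.isPhylo_iff_labels {n : ℕ} {t : BTree ℕ} : isPhylo n t ↔ labels t = taxa n := by
  rw [isPhylo, labels, taxa, Multiset.range, Multiset.map_coe, Multiset.coe_eq_coe]

-- Shifted index: `phyloList n` lists trees on the taxa `1, …, n + 1`.
def phyloList : ℕ → List (BTree ℕ)
  | 0 => [leaf 1]
  | n + 1 => (phyloList n).flatMap (attach (n + 2))

lemma labels_of_mem_phyloList {n : ℕ} {t : BTree ℕ} (ht : t ∈ phyloList n) :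
    labels t = taxa (n + 1) := by
  induction n generalizing t with
  | zero => simp_all [phyloList, taxa]
  | succ n ih =>
    obtain ⟨s, hs, hts⟩ := List.mem_flatMap.mp ht
    rw [labels_of_mem_attach hts, ih hs, taxa_succ (n + 1)]

lemma leaves_of_mem_phyloList {n : ℕ} {t : BTree ℕ} (ht : t ∈ phyloList n) :
    leaves t = n + 1 := by
  rw [← card_labels, labels_of_mem_phyloList ht, card_taxa]

lemma nodup_map_mk_phyloList (n : ℕ) : ((phyloList n).map PTree.mk).Nodup := by
  induction n with
  | zero => simp [phyloList]
  | succ n ih =>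
    have hnew : ∀ {s}, s ∈ phyloList n → n + 2 ∉ labels s := fun hs => by
      rw [labels_of_mem_phyloList hs, mem_taxa]; omega
    rw [phyloList, List.map_flatMap, List.nodup_flatMap]
    refine ⟨fun s hs => nodup_map_mk_attach (hnew hs)
      (labels_of_mem_phyloList hs ▸ nodup_taxa _), ?_⟩
    refine (List.pairwise_map.mp ih).imp_of_mem fun ha hb hab q hqa hqb => hab ?_
    obtain ⟨t₁, ht₁, rfl⟩ := List.mem_map.mp hqa
    obtain ⟨t₂, ht₂, he⟩ := List.mem_map.mp hqb
    have := mk_eraseLeaf_eq (n + 2) he.symm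
    rwa [eraseLeaf_of_mem_attach (hnew ha) ht₁, eraseLeaf_of_mem_attach (hnew hb) ht₂] at this

lemma exists_mem_phyloList_mk_eq {n : ℕ} {t : BTree ℕ} (ht : labels t = taxa (n + 1)) :
    ∃ s ∈ phyloList n, PTree.mk s = PTree.mk t := by
  induction n generalizing t with
  | zero =>
    cases t with
    | leaf a => exact ⟨leaf 1, by simp [phyloList], by simp_all [taxa]⟩
    | node l r =>
      have := congrArg Multiset.card ht
      simp only [card_labels, card_taxa, leaves] at this
      have := leaves_pos l
      have := leaves_pos r
      omega
  | succ n ih =>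
    have hx : n + 2 ∈ labels t := by rw [ht, mem_taxa]; omega
    have hne : t ≠ leaf (n + 2) := by
      rintro rfl
      simpa [card_taxa] using congrArg Multiset.card ht
    obtain ⟨s, hs, t', ht', hm⟩ := exists_mem_attach_of_mem_labels hx hne
    rw [ht, taxa_succ (n + 1), Multiset.cons_inj_right] at hs
    obtain ⟨s₀, hs₀, hm₀⟩ := ih hs.symm
    obtain ⟨t'', ht'', hm'⟩ := exists_mem_attach_mk_eq hm₀.symm ht'
    exact ⟨t'', List.mem_flatMap.mpr ⟨s₀, hs₀, ht''⟩, hm'.trans hm⟩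

lemma BTree.labels_out_mk (t : BTree ℕ) : labels (PTree.mk t).out = labels t :=
  eq_of_mk_eq labels (fun _ _ h => h.labels_eq) (Quot.out_eq _)

lemma BTree.sackin_out_mk (t : BTree ℕ) : sackin (PTree.mk t).out = sackin t :=
  eq_of_mk_eq sackin (fun _ _ h => h.sackin_eq) (Quot.out_eq _)

lemma phyloSet_succ (n : ℕ) :
    PhyloSet (n + 1) = {q | q ∈ (phyloList n).map PTree.mk} := by
  ext q
  change isPhylo (n + 1) q.out ↔ q ∈ (phyloList n).map PTree.mk
  rw [isPhylo_iff_labels, List.mem_map]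
  constructor
  · intro h
    obtain ⟨s, hs, hst⟩ := exists_mem_phyloList_mk_eq h
    exact ⟨s, hs, hst.trans (Quot.out_eq q)⟩
  · rintro ⟨s, hs, rfl⟩
    rw [labels_out_mk, labels_of_mem_phyloList hs]

lemma spTotal_succ (n : ℕ) : SpTotal (n + 1) = ((phyloList n).map sackin).sum := by
  classical
  have hset : PhyloSet (n + 1) = ↑(((phyloList n).map PTree.mk).toFinset) := by
    rw [phyloSet_succ]; ext; simp
  rw [SpTotal, hset, finsum_mem_coe_finset, List.sum_toFinset _ (nodup_map_mk_phyloList n),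
    List.map_map]
  exact congrArg List.sum (List.map_congr_left fun t _ => sackin_out_mk t)

section

open Nat

-- At `n = 0`, `2 * n - 1` truncates to `0`, and `0‼ = 1` stands in for `(-1)‼`.
lemma length_phyloList (n : ℕ) : (phyloList n).length = (2 * n - 1)‼ := by
  induction n with
  | zero => rfl
  | succ n ih =>
    have hlen : ∀ t ∈ phyloList n, (attach (n + 2) t).length = 2 * n + 1 := fun t ht => by
      have := length_attach (n + 2) t
      rw [leaves_of_mem_phyloList ht] at this
      omega
    rw [phyloList, List.length_flatMap, List.map_congr_left hlen, List.map_const',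
      List.sum_replicate, ih, smul_eq_mul, show 2 * (n + 1) - 1 = 2 * n + 1 by omega,
      doubleFactorial_add_one, mul_comm]

lemma sum_sackin_phyloList_add (n : ℕ) :
    ((phyloList n).map sackin).sum + (n + 1) * (2 * n - 1)‼ = 2 ^ n * (n + 1)! := by
  induction n with
  | zero => simp [phyloList, sackin]
  | succ n ih =>
    have hstep : ∀ s ∈ phyloList n,
        ((attach (n + 2) s).map sackin).sum = (2 * n + 4) * sackin s + (n + 2) := fun s hs => by
      rw [sum_sackin_attach, leaves_of_mem_phyloList hs]; ring
    have hsum : ((phyloList (n + 1)).map sackin).sum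
        = (2 * n + 4) * ((phyloList n).map sackin).sum + (phyloList n).length * (n + 2) := by
      rw [phyloList, List.map_flatMap, List.flatMap_def, List.sum_flatten, List.map_map,
        Function.comp_def, List.map_congr_left hstep, List.sum_map_add, List.sum_map_mul_left,
        List.map_const', List.sum_replicate, smul_eq_mul]
    rw [hsum, length_phyloList, show 2 * (n + 1) - 1 = 2 * n + 1 by omega,
      doubleFactorial_add_one, factorial_succ (n + 1), pow_succ]
    linear_combination (2 * n + 4) * ih

lemma Nat.factorial_two_mul_eq_mul_doubleFactorial (n : ℕ) :
    (2 * n)! = 2 ^ n * n ! * (2 * n - 1)‼ := by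
  cases n with
  | zero => rfl
  | succ n =>
    rw [show 2 * (n + 1) = 2 * n + 1 + 1 by ring, factorial_eq_mul_doubleFactorial,
      show 2 * n + 1 + 1 = 2 * (n + 1) by ring, doubleFactorial_two_mul,
      show 2 * (n + 1) - 1 = 2 * n + 1 by omega]

end

/-- for `n ≥ 1`,
`S⁽ᵖ⁾_n = 2^(n-1) n! - n (2n-2)! / (2^(n-1) (n-1)!)`. -/
theorem stmt_19 : ∀ n : ℕ, 1 ≤ n →
    SpTotal n = 2 ^ (n - 1) * Nat.factorial n -
      n * (Nat.factorial (2 * n - 2) / (2 ^ (n - 1) * Nat.factorial (n - 1))) := by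
  intro n hn
  obtain ⟨k, rfl⟩ : ∃ k, n = k + 1 := ⟨n - 1, by omega⟩
  rw [show 2 * (k + 1) - 2 = 2 * k by omega, Nat.add_sub_cancel,
    Nat.factorial_two_mul_eq_mul_doubleFactorial, Nat.mul_div_cancel_left _ (by positivity),
    spTotal_succ, ← sum_sackin_phyloList_add, Nat.add_sub_cancel]
end
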